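/- arXiv:2505.20717 — 5 statements merged into one kernel-verified Lean document; each statement's English description precedes it below -/
import Mathlib

section
/- Let β, r, θ, c > 0 be real parameters and h ∈ {1,2}. A point (u,v) with u > 0 and v > 0 is a fixed point of the map V_h (i.e. V_h(u,v) = (u,v)) if and only if v = 1 - u (so in particular 0 < u < 1) and θ = (β u - r)(1 + c u^h)/u^h. -/
/-! Subtracting the identity, each component of `V_h(u,v) - (u,v)` factors through `u` resp. `v`:
`u(1 - u - v)` and `v(β u - r - θ u^h/(1 + c u^h))`. At a positive point both factors `u`, `v`
cancel, leaving `v = 1 - u` and `θ = Ψ_h(u)`. -/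

noncomputable def Vh (β r θ c : ℝ) (h : ℕ) (p : ℝ × ℝ) : ℝ × ℝ :=
  (p.1 * (2 - p.1) - p.1 * p.2,
   β * p.1 * p.2 + (1 - r) * p.2 - θ * p.1 ^ h * p.2 / (1 + c * p.1 ^ h))

noncomputable def Ψh (β r c : ℝ) (h : ℕ) (u : ℝ) : ℝ :=
  (β * u - r) * (1 + c * u ^ h) / u ^ h

lemma Vh_fst_eq_self_iff {u v : ℝ} (hu : u ≠ 0) :
    u * (2 - u) - u * v = u ↔ v = 1 - u := by
  rw [← sub_eq_zero, show u * (2 - u) - u * v - u = u * (1 - u - v) by ring, mul_eq_zero,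
    or_iff_right hu, sub_eq_zero, eq_comm]

lemma Vh_snd_eq_self_iff {β r θ c : ℝ} {h : ℕ} {u v : ℝ} (hu : u ≠ 0) (hv : v ≠ 0)
    (hD : 1 + c * u ^ h ≠ 0) :
    β * u * v + (1 - r) * v - θ * u ^ h * v / (1 + c * u ^ h) = v ↔ θ = Ψh β r c h u := by
  have factor : β * u * v + (1 - r) * v - θ * u ^ h * v / (1 + c * u ^ h) - v =
      v * (β * u - r - θ * u ^ h / (1 + c * u ^ h)) := by ring
  rw [← sub_eq_zero, factor, mul_eq_zero, or_iff_right hv, sub_eq_zero, eq_div_iff hD, Ψh,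
    eq_div_iff (pow_ne_zero h hu), eq_comm]

lemma Vh_eq_self_iff {β r θ c : ℝ} {h : ℕ} {u v : ℝ} (hu : u ≠ 0) (hv : v ≠ 0)
    (hD : 1 + c * u ^ h ≠ 0) :
    Vh β r θ c h (u, v) = (u, v) ↔ v = 1 - u ∧ θ = Ψh β r c h u := by
  rw [Vh, Prod.mk.injEq, Vh_fst_eq_self_iff hu, Vh_snd_eq_self_iff hu hv hD]

theorem positive_fixed_point_iff_general (β r θ c : ℝ) (hc : 0 < c) (h : ℕ)
    (u v : ℝ) (hu : 0 < u) (hv : 0 < v) :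
    Vh β r θ c h (u, v) = (u, v) ↔
      v = 1 - u ∧ 0 < u ∧ u < 1 ∧
        θ = (β * u - r) * (1 + c * u ^ h) / u ^ h := by
  have hD : 1 + c * u ^ h ≠ 0 := by positivity
  rw [Vh_eq_self_iff hu.ne' hv.ne' hD]
  constructor
  · rintro ⟨hv_eq, hθ_eq⟩
    exact ⟨hv_eq, hu, by linarith, hθ_eq⟩
  · rintro ⟨hv_eq, -, -, hθ_eq⟩
    exact ⟨hv_eq, hθ_eq⟩

/-- A point `(u,v)` with `u > 0`, `v > 0` is a fixed point of `V_h` iff `v = 1 - u`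
(so in particular `0 < u < 1`) and `θ = (β u - r)(1 + c u^h)/u^h`. -/
theorem positive_fixed_point_iff (β r θ c : ℝ) (hβ : 0 < β) (hr : 0 < r)
    (hθ : 0 < θ) (hc : 0 < c) (h : ℕ) (hh : h = 1 ∨ h = 2)
    (u v : ℝ) (hu : 0 < u) (hv : 0 < v) :
    Vh β r θ c h (u, v) = (u, v) ↔
      v = 1 - u ∧ 0 < u ∧ u < 1 ∧
        θ = (β * u - r) * (1 + c * u ^ h) / u ^ h :=
  positive_fixed_point_iff_general β r θ c hc h u v hu hv
end

section
/- Let β, r, θ, c > 0 and h ∈ {1,2}. If β ≤ r, then the map V_h has no positive fixed point, i.e. there is no point (u,v) with u > 0 and v > 0 satisfying V_h(u,v) = (u,v). -/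
/-- If `β ≤ r`, the map `V_h` (for `h ∈ {1,2}`) has no positive fixed point. -/
theorem no_positive_fixed_point_of_beta_le_r (β r θ c : ℝ) (hβ : 0 < β) (hr : 0 < r)
    (hθ : 0 < θ) (hc : 0 < c) (h : ℕ) (hh : h = 1 ∨ h = 2) (hβr : β ≤ r) :
    ¬ ∃ p : ℝ × ℝ, 0 < p.1 ∧ 0 < p.2 ∧ Vh β r θ c h p = p := by
  rintro ⟨⟨u, v⟩, hu, hv, hfix⟩
  simp only [Vh, Prod.mk.injEq] at hfix
  obtain ⟨h1, h2⟩ := hfix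
  -- from the first equation: v = 1 - u, hence u < 1
  have hv1 : v = 1 - u := by
    have := h1
    field_simp at this ⊢
    nlinarith [hu]
  have hu1 : u < 1 := by nlinarith
  have huh : 0 < u ^ h := pow_pos hu h
  have hD : 0 < 1 + c * u ^ h := by positivity
  -- from the second equation
  have key : θ * u ^ h * v = (β * u - r) * v * (1 + c * u ^ h) := by
    have := h2
    field_simp at this
    nlinarith [this]
  have hlt : β * u - r < 0 := by nlinarith
  nlinarith [mul_pos (mul_pos hθ huh) hv, mul_pos hv hD]
end

section
/- Let β, r, θ, c > 0 and suppose one of the following holds: (a) 0 < r ≤ 1 and 0 < θ ≤ 1 + β - r; (b) 0 < r < 1, 1 + β - r < θ ≤ (1 + β - r)²/β, and c ≥ θ/(1 + β - r) - 1; (c) 0 < r < 1, θ > (1 + β - r)²/β, and c ≥ (√β - √θ)²/(1 - r). Then for every u ∈ [0,1] and every v ≥ 0, the second component of V₁(u,v) is nonnegative, i.e. β u v + (1-r)v - θ u v/(1 + c u) ≥ 0; equivalently β c u² + (β + c - r c - θ)u + 1 - r ≥ 0 for all u ∈ [0,1]. -/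
/-- Under each of conditions (a), (b), (c) on the parameters, the second component
of `V₁(u,v) = (u(2-u) - uv, βuv + (1-r)v - θuv/(1+cu))` is nonnegative for all
`u ∈ [0,1]` and `v ≥ 0`; equivalently `βcu² + (β + c - rc - θ)u + 1 - r ≥ 0` on `[0,1]`. -/
theorem second_component_nonneg_V1 (β r θ c : ℝ) (hβ : 0 < β) (hr : 0 < r)
    (hθ : 0 < θ) (hc : 0 < c)
    (hcond :
      (r ≤ 1 ∧ θ ≤ 1 + β - r) ∨
      (r < 1 ∧ 1 + β - r < θ ∧ θ ≤ (1 + β - r) ^ 2 / β ∧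
        θ / (1 + β - r) - 1 ≤ c) ∨
      (r < 1 ∧ (1 + β - r) ^ 2 / β < θ ∧
        (Real.sqrt β - Real.sqrt θ) ^ 2 / (1 - r) ≤ c)) :
    (∀ u ∈ Set.Icc (0 : ℝ) 1, ∀ v : ℝ, 0 ≤ v →
      0 ≤ β * u * v + (1 - r) * v - θ * u * v / (1 + c * u)) ∧
    (∀ u ∈ Set.Icc (0 : ℝ) 1,
      0 ≤ β * c * u ^ 2 + (β + c - r * c - θ) * u + 1 - r) := by
  have key : ∀ u ∈ Set.Icc (0 : ℝ) 1,
      0 ≤ β * c * u ^ 2 + (β + c - r * c - θ) * u + 1 - r := by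
    rintro u ⟨hu0, hu1⟩
    rcases hcond with ⟨hr1, hθ1⟩ | ⟨hr1, hθ1, hθ2, hc1⟩ | ⟨hr1, hθ1, hc1⟩
    · -- case (a)
      nlinarith [mul_nonneg hu0 (sub_nonneg.2 hu1),
        mul_nonneg (mul_nonneg hc.le hu0) (sub_nonneg.2 hr1),
        mul_nonneg (mul_nonneg (mul_nonneg hβ.le hc.le) hu0) hu0,
        mul_nonneg hu0 (sub_nonneg.2 hθ1)]
    · -- case (b)
      have hA : 0 < 1 + β - r := by linarith
      have hk : (0:ℝ) ≤ 1 - r := by linarith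
      have hθA : θ ≤ (1 + β - r) * (1 + c) := by
        have h := mul_le_mul_of_nonneg_left hc1 hA.le
        have h2 : (1 + β - r) * (θ / (1 + β - r)) = θ := by
          field_simp
        nlinarith [h, h2]
      have hθβ : θ * β ≤ (1 + β - r) ^ 2 := (le_div_iff₀ hβ).mp hθ2
      rcases le_or_gt (β * c) (1 - r) with hbc | hbc
      · have hbcu : β * c * u ≤ 1 - r := by nlinarith
        nlinarith [mul_nonneg (sub_nonneg.2 hu1) (sub_nonneg.2 hbcu),
          mul_nonneg hu0 (sub_nonneg.2 hθA)]
      · nlinarith [mul_nonneg (mul_nonneg (sub_nonneg.2 hbc.le) hβ.le) (sq_nonneg u),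
          mul_nonneg (mul_nonneg (sub_nonneg.2 hbc.le) hk) hu0,
          mul_nonneg (mul_nonneg hβ.le hk) (sq_nonneg (1 - u)),
          mul_nonneg hu0 (sub_nonneg.2 hθβ)]
    · -- case (c)
      have hk : (0:ℝ) < 1 - r := by linarith
      set a := Real.sqrt β with ha
      set t := Real.sqrt θ with ht
      set sc := Real.sqrt c with hsc
      set z := Real.sqrt (1 - r) with hz
      have haa : a * a = β := Real.mul_self_sqrt hβ.le
      have htt : t * t = θ := Real.mul_self_sqrt hθ.le
      have hscc : sc * sc = c := Real.mul_self_sqrt hc.le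
      have hzz : z * z = 1 - r := Real.mul_self_sqrt hk.le
      have ha0 : 0 ≤ a := Real.sqrt_nonneg _
      have ht0 : 0 ≤ t := Real.sqrt_nonneg _
      have hsc0 : 0 ≤ sc := Real.sqrt_nonneg _
      have hz0 : 0 ≤ z := Real.sqrt_nonneg _
      have hck : (a - t) ^ 2 ≤ c * (1 - r) := by
        have := (div_le_iff₀ hk).mp hc1
        linarith
      -- sc * z ≥ t - a
      have hsz : t - a ≤ sc * z := by
        nlinarith [mul_nonneg hsc0 hz0, sq_nonneg (sc * z - (t - a)), hck]
      have hat : t ≤ a + sc * z := by linarith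
      have hexp : (a + sc * z) ^ 2 = β + c * (1 - r) + 2 * (a * (sc * z)) := by
        have h : (a + sc * z) ^ 2 = a * a + (sc * sc) * (z * z) + 2 * (a * (sc * z)) := by
          ring
        rw [h, haa, hscc, hzz]
      have h1 : (a * sc * u - z) ^ 2 = β * c * u ^ 2 - 2 * (a * (sc * z)) * u + (1 - r) := by
        have h : (a * sc * u - z) ^ 2
            = (a * a) * (sc * sc) * u ^ 2 - 2 * (a * (sc * z)) * u + z * z := by ring
        rw [h, haa, hscc, hzz]
      have amgm : 2 * (a * (sc * z)) * u ≤ β * c * u ^ 2 + (1 - r) := by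
        linarith [sq_nonneg (a * sc * u - z), h1]
      have ht2 : t ^ 2 = θ := Real.sq_sqrt hθ.le
      have key2 : θ * u ≤ (a + sc * z) ^ 2 * u := by
        have h := mul_le_mul_of_nonneg_right (pow_le_pow_left₀ ht0 hat 2) hu0
        rwa [ht2] at h
      rw [hexp] at key2
      linarith [amgm, key2]
  refine ⟨?_, key⟩
  rintro u ⟨hu0, hu1⟩ v hv
  have hq := key u ⟨hu0, hu1⟩
  have hpos : 0 < 1 + c * u := by positivity
  have heq : β * u * v + (1 - r) * v - θ * u * v / (1 + c * u)
      = v * (β * c * u ^ 2 + (β + c - r * c - θ) * u + 1 - r) / (1 + c * u) := by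
    field_simp
    ring
  rw [heq]
  exact div_nonneg (mul_nonneg hv hq) hpos.le
end

section
/- Let β, c > 0, 0 < r ≤ 1, and 0 < θ ≤ min{(1+c)(β - r + 1), (3+c)(1-r) + 2β}. Then the cubic polynomial ψ(u) = β c u³ - (r c - c + θ)u² + β u + 1 - r satisfies ψ(u) ≥ 0 for all u ∈ [0,1]; consequently, for every u ∈ [0,1] and every v ≥ 0 the second component of V₂(u,v) is nonnegative, i.e. β u v + (1-r)v - θ u² v/(1 + c u²) ≥ 0. -/
/-- The map `V₂(u,v) = (u(2-u) - u v, β u v + (1-r) v - θ u² v/(1 + c u²))`. -/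
noncomputable def V2 (β r θ c : ℝ) (p : ℝ × ℝ) : ℝ × ℝ :=
  (p.1 * (2 - p.1) - p.1 * p.2,
   β * p.1 * p.2 + (1 - r) * p.2 - θ * p.1 ^ 2 * p.2 / (1 + c * p.1 ^ 2))

/-- For `β, c > 0`, `0 < r ≤ 1` and `0 < θ ≤ min{(1+c)(β-r+1), (3+c)(1-r)+2β}`,
the cubic `ψ(u) = βcu³ - (rc - c + θ)u² + βu + 1 - r` is nonnegative on `[0,1]`;
consequently the second component of `V₂(u,v)` is nonnegative for all `u ∈ [0,1]`,
`v ≥ 0`. -/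
theorem second_component_nonneg_V2 (β r θ c : ℝ) (hβ : 0 < β) (hc : 0 < c)
    (hr0 : 0 < r) (hr1 : r ≤ 1) (hθ0 : 0 < θ)
    (hθ : θ ≤ min ((1 + c) * (β - r + 1)) ((3 + c) * (1 - r) + 2 * β)) :
    (∀ u ∈ Set.Icc (0 : ℝ) 1,
      0 ≤ β * c * u ^ 3 - (r * c - c + θ) * u ^ 2 + β * u + 1 - r) ∧
    (∀ u ∈ Set.Icc (0 : ℝ) 1, ∀ v : ℝ, 0 ≤ v →
      0 ≤ β * u * v + (1 - r) * v - θ * u ^ 2 * v / (1 + c * u ^ 2)) := by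
  have hθ1 : θ ≤ (1 + c) * (β - r + 1) := le_trans hθ (min_le_left _ _)
  have hθ2 : θ ≤ (3 + c) * (1 - r) + 2 * β := le_trans hθ (min_le_right _ _)
  have key : ∀ u ∈ Set.Icc (0 : ℝ) 1,
      0 ≤ β * c * u ^ 3 - (r * c - c + θ) * u ^ 2 + β * u + 1 - r := by
    intro u hu
    obtain ⟨h0, h1⟩ := hu
    have h1' : 0 ≤ 1 - u := by linarith
    -- Bernstein coefficients
    have b0 : (0:ℝ) ≤ 1 - r := by linarith
    have b1 : (0:ℝ) ≤ (1 - r) + β / 3 := by linarith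
    have b2 : (0:ℝ) ≤ ((3 + c) * (1 - r) + 2 * β - θ) / 3 := by linarith
    have b3 : (0:ℝ) ≤ (1 + c) * (β - r + 1) - θ := by linarith
    nlinarith [mul_nonneg (mul_nonneg (mul_nonneg b0 h1') h1') h1',
      mul_nonneg (mul_nonneg (mul_nonneg (mul_nonneg b1 h0) h1') h1') (by norm_num : (0:ℝ) ≤ 3),
      mul_nonneg (mul_nonneg (mul_nonneg (mul_nonneg b2 h0) h0) h1') (by norm_num : (0:ℝ) ≤ 3),
      mul_nonneg (mul_nonneg (mul_nonneg b3 h0) h0) h0]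
  refine ⟨key, fun u hu v hv => ?_⟩
  obtain ⟨h0, h1⟩ := hu
  have hden : 0 < 1 + c * u ^ 2 := by positivity
  have hψ := key u ⟨h0, h1⟩
  have heq : β * u * v + (1 - r) * v - θ * u ^ 2 * v / (1 + c * u ^ 2)
      = v * (β * c * u ^ 3 - (r * c - c + θ) * u ^ 2 + β * u + 1 - r) / (1 + c * u ^ 2) := by
    field_simp
    ring
  rw [heq]
  exact div_nonneg (mul_nonneg hv hψ) hden.le
end

section
/- Let h ∈ {1,2}, β, c > 0, 0 < ũ < 1, and θ₀ ∈ ℝ satisfy (1 - ũ)(β - h θ₀ ũ^{h-1}/(1 + c ũ^h)²) = 1. For θ* ∈ ℝ define the 2×2 real matrix J(θ*) = [[1 - ũ, -ũ], [(1 - ũ)(β - h(θ₀ + θ*) ũ^{h-1}/(1 + c ũ^h)²), 1 - θ* ũ^h/(1 + c ũ^h)]]. Then: (1) det J(θ*) = 1 - θ* ũ^h (1 - ũ)(1 + h + c ũ^h)/(1 + c ũ^h)² for all θ*; (2) there is a neighborhood of θ* = 0 on which the eigenvalues of J(θ*) form a nonreal complex-conjugate pair λ, λ̄ with |λ| = √(det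 J(θ*)); (3) the derivative of the function θ* ↦ √(det J(θ*)) at θ* = 0 equals -ũ^h (1 - ũ)(1 + h + c ũ^h)/(2(1 + c ũ^h)²), which is strictly negative; and (4) at θ* = 0 the eigenvalues λ = ((2 - ũ) ± i√(4ũ - ũ²))/2 satisfy |λ| = 1 and λ^m ≠ 1 for m = 1, 2, 3, 4. -/
/-!
The Neimark–Sacker condition says exactly that the `θ₀`-part of the cross term
`ũ · (1 - ũ)(β - h(θ₀+θ*)ũ^{h-1}/(1+cũ^h)²)` of `det J(θ*)` equals `ũ`, so `det J(θ*)` is affine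
in `θ*` with value `1` at `0`, while `tr J(0) = 2 - ũ ∈ (1, 2)`. Hence `tr² < 4 det` at `θ* = 0`
and, by continuity, nearby: the eigenvalues are a nonreal conjugate pair `(tr ± i√(4 det - tr²))/2`
of modulus `√det`. At `θ* = 0` they lie on the unit circle with real part `> 1/2`, i.e. with
argument of absolute value `< π/3`, so none of their first five powers is `1`.
-/

/-- The Jacobian matrix at the origin of the perturbed (shifted) system: for the
perturbation `θ = θ₀ + θ*`,
`J(θ*) = [[1-ũ, -ũ], [(1-ũ)(β - h(θ₀+θ*)ũ^{h-1}/(1+cũ^h)²), 1 - θ* ũ^h/(1+cũ^h)]]`. -/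
noncomputable def Jpert (β c u θ₀ : ℝ) (h : ℕ) (t : ℝ) : Matrix (Fin 2) (Fin 2) ℝ :=
  !![1 - u, -u;
     (1 - u) * (β - (h : ℝ) * (θ₀ + t) * u ^ (h - 1) / (1 + c * u ^ h) ^ 2),
     1 - t * u ^ h / (1 + c * u ^ h)]

open Polynomial Complex ComplexConjugate Real

theorem quadratic_eq_zero_iff_of_sq_eq {T Δ s : ℝ} (hs : s ^ 2 = 4 * Δ - T ^ 2) (l : ℂ) :
    l ^ 2 - T * l + Δ = 0 ↔ l = (T + I * s) / 2 ∨ l = (T - I * s) / 2 := by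
  have hdisc : discrim (1 : ℂ) (-T) Δ = (I * s) * (I * s) := by
    have hs' : (s : ℂ) ^ 2 = 4 * Δ - T ^ 2 := by exact_mod_cast hs
    rw [discrim]
    linear_combination hs' - (s : ℂ) ^ 2 * I_sq
  have hquad := quadratic_eq_zero_iff one_ne_zero hdisc l
  simp only [neg_neg, mul_one, one_mul] at hquad
  rw [← hquad]
  ring_nf

theorem norm_add_I_mul_div_two_of_sq_eq {T Δ s : ℝ} (hs : s ^ 2 = 4 * Δ - T ^ 2) :
    ‖((T : ℂ) + I * s) / 2‖ = √Δ := by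
  have hsum : T ^ 2 + s ^ 2 = 2 ^ 2 * Δ := by linarith
  rw [norm_div, mul_comm I, norm_add_mul_I, hsum, sqrt_mul (by norm_num), sqrt_sq (by norm_num)]
  simp

theorem conj_add_I_mul_div_two (T s : ℝ) :
    conj (((T : ℂ) + I * s) / 2) = ((T : ℂ) - I * s) / 2 := by
  simp [map_ofNat, sub_eq_add_neg]

theorem Matrix.aeval_charpoly_eq_zero_iff_of_sq_eq (M : Matrix (Fin 2) (Fin 2) ℝ) {s : ℝ}
    (hs : s ^ 2 = 4 * M.det - M.trace ^ 2) (l : ℂ) :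
    aeval l M.charpoly = 0 ↔ l = (M.trace + I * s) / 2 ∨ l = (M.trace - I * s) / 2 := by
  rw [← quadratic_eq_zero_iff_of_sq_eq hs, M.charpoly_fin_two]
  simp [coe_algebraMap]

theorem Matrix.exists_conj_pair_roots_charpoly (M : Matrix (Fin 2) (Fin 2) ℝ)
    (hM : M.trace ^ 2 < 4 * M.det) :
    ∃ μ : ℂ, μ.im ≠ 0 ∧ ‖μ‖ = √M.det ∧
      ∀ l : ℂ, aeval l M.charpoly = 0 ↔ l = μ ∨ l = conj μ := by
  set s := √(4 * M.det - M.trace ^ 2)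
  have hs : s ^ 2 = 4 * M.det - M.trace ^ 2 := sq_sqrt (by linarith)
  refine ⟨(M.trace + I * s) / 2, ?_, norm_add_I_mul_div_two_of_sq_eq hs, ?_⟩
  · have him : ((M.trace + I * s) / 2 : ℂ).im = s / 2 := by simp
    rw [him]
    exact (half_pos (sqrt_pos.mpr (by linarith))).ne'
  · rw [conj_add_I_mul_div_two]
    exact M.aeval_charpoly_eq_zero_iff_of_sq_eq hs

theorem exists_conj_pair_roots_charpoly_near {M : ℝ → Matrix (Fin 2) (Fin 2) ℝ} {t₀ : ℝ}
    (hM : ContinuousAt M t₀) (h₀ : (M t₀).trace ^ 2 < 4 * (M t₀).det) :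
    ∃ ε : ℝ, 0 < ε ∧ ∀ t : ℝ, |t - t₀| < ε →
      ∃ μ : ℂ, μ.im ≠ 0 ∧ ‖μ‖ = √(M t).det ∧
        ∀ l : ℂ, aeval l (M t).charpoly = 0 ↔ l = μ ∨ l = conj μ := by
  have hdisc : ∀ᶠ t in nhds t₀, (M t).trace ^ 2 < 4 * (M t).det :=
    ((continuous_id.matrix_trace.pow 2).continuousAt.comp hM).eventually_lt
      (continuousAt_const.mul (continuous_id.matrix_det.continuousAt.comp hM)) h₀
  obtain ⟨ε, hε, hball⟩ := Metric.eventually_nhds_iff.mp hdisc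
  exact ⟨ε, hε, fun t ht => (M t).exists_conj_pair_roots_charpoly (hball ht)⟩

theorem pow_ne_one_of_abs_arg {z : ℂ} (hz : ‖z‖ = 1) (harg : arg z ≠ 0) {m : ℕ} (hm : 0 < m)
    (hlt : m * |arg z| < 2 * π) : z ^ m ≠ 1 := by
  intro hzm
  have hzexp : exp (arg z * I) = z := by simpa [hz] using norm_mul_exp_arg_mul_I z
  have hexp : exp ((m * arg z : ℝ) * I) = 1 := by
    calc exp ((m * arg z : ℝ) * I) = exp (arg z * I) ^ m := by
          rw [← Complex.exp_nat_mul]; push_cast; ring_nf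
      _ = 1 := by rw [hzexp, hzm]
  obtain ⟨n, hn⟩ := exp_eq_one_iff.mp hexp
  have hn' : m * arg z = n * (2 * π) := by simpa using congrArg im hn
  have hmarg : |(n : ℝ)| * (2 * π) = m * |arg z| := by
    rw [← abs_of_pos two_pi_pos, ← abs_mul, ← hn', abs_mul, Nat.abs_cast]
  have hpos : 0 < m * |arg z| := by positivity
  rcases eq_or_ne n 0 with rfl | hn0
  · simp only [Int.cast_zero, abs_zero, zero_mul] at hmarg
    linarith
  · have : (1 : ℝ) ≤ |(n : ℝ)| := by exact_mod_cast Int.one_le_abs hn0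
    nlinarith [two_pi_pos]

theorem abs_arg_lt_pi_div_three {z : ℂ} (h : ‖z‖ < 2 * z.re) : |arg z| < π / 3 := by
  have hz : z ≠ 0 := by rintro rfl; simp at h
  have hcos : 1 / 2 < Real.cos |arg z| := by
    rw [Real.cos_abs, cos_arg hz, lt_div_iff₀ (norm_pos_iff.mpr hz)]
    linarith
  by_contra! hle
  have := Real.cos_le_cos_of_nonneg_of_le_pi (by positivity) (abs_arg_le_pi z) hle
  rw [Real.cos_pi_div_three] at this
  linarith

theorem pow_ne_one_of_two_mul_re_gt_one {z : ℂ} (hz : ‖z‖ = 1) (hre : 1 < 2 * z.re)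
    (him : z.im ≠ 0) {m : ℕ} (hm₀ : 0 < m) (hm : m ≤ 5) : z ^ m ≠ 1 := by
  have harg : arg z ≠ 0 := fun h => him (arg_eq_zero_iff.mp h).2
  refine pow_ne_one_of_abs_arg hz harg hm₀ ?_
  have hlt := abs_arg_lt_pi_div_three (hz ▸ hre)
  have : (m : ℝ) ≤ 5 := by exact_mod_cast hm
  nlinarith [abs_nonneg (arg z), Real.pi_pos]

theorem Matrix.unit_circle_roots_charpoly_of_det_eq_one {M : Matrix (Fin 2) (Fin 2) ℝ} {u : ℝ}
    (hdet : M.det = 1) (htr : M.trace = 2 - u) (hu0 : 0 < u) (hu1 : u < 1) :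
    ‖(2 - (u : ℂ) + I * (√(4 * u - u ^ 2) : ℝ)) / 2‖ = 1 ∧
    (∀ l : ℂ, aeval l M.charpoly = 0 ↔
        l = (2 - (u : ℂ) + I * (√(4 * u - u ^ 2) : ℝ)) / 2 ∨
        l = (2 - (u : ℂ) - I * (√(4 * u - u ^ 2) : ℝ)) / 2) ∧
    ∀ m : ℕ, 1 ≤ m → m ≤ 4 →
      ((2 - (u : ℂ) + I * (√(4 * u - u ^ 2) : ℝ)) / 2) ^ m ≠ 1 ∧
      ((2 - (u : ℂ) - I * (√(4 * u - u ^ 2) : ℝ)) / 2) ^ m ≠ 1 := by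
  set s := √(4 * u - u ^ 2)
  have hs : s ^ 2 = 4 * M.det - M.trace ^ 2 := by
    rw [hdet, htr, sq_sqrt (by nlinarith)]; ring
  have hroots := M.aeval_charpoly_eq_zero_iff_of_sq_eq hs
  have hz := norm_add_I_mul_div_two_of_sq_eq hs
  have hzbar := conj_add_I_mul_div_two M.trace s
  rw [htr] at hroots hz hzbar
  rw [hdet, Real.sqrt_one] at hz
  push_cast at hroots hz hzbar
  refine ⟨hz, hroots, fun m hm₁ hm₄ => ?_⟩
  set z := (2 - (u : ℂ) + I * s) / 2
  have hzre : z.re = (2 - u) / 2 := by simp [z]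
  have hzim : z.im = s / 2 := by simp [z]
  have hre : 1 < 2 * z.re := by rw [hzre]; linarith
  have him : z.im ≠ 0 := by
    rw [hzim]
    exact (half_pos (sqrt_pos.mpr (by nlinarith))).ne'
  rw [← hzbar]
  exact ⟨pow_ne_one_of_two_mul_re_gt_one hz hre him hm₁ (by omega),
    pow_ne_one_of_two_mul_re_gt_one (by rwa [norm_conj]) (by rwa [conj_re])
      (by rwa [conj_im, neg_ne_zero]) hm₁ (by omega)⟩

section Jpert

variable {β c u θ₀ : ℝ} {h : ℕ}

theorem continuous_Jpert : Continuous (Jpert β c u θ₀ h) := by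
  refine continuous_matrix fun i j => ?_
  fin_cases i <;> fin_cases j <;> simp [Jpert] <;> fun_prop

theorem trace_Jpert (t : ℝ) :
    (Jpert β c u θ₀ h t).trace = 2 - u - t * u ^ h / (1 + c * u ^ h) := by
  rw [Jpert, Matrix.trace_fin_two_of]
  ring

theorem det_Jpert (hh : h ≠ 0) (hD : 1 + c * u ^ h ≠ 0)
    (hns : (1 - u) * (β - (h : ℝ) * θ₀ * u ^ (h - 1) / (1 + c * u ^ h) ^ 2) = 1) (t : ℝ) :
    (Jpert β c u θ₀ h t).det
      = 1 - t * u ^ h * (1 - u) * (1 + (h : ℝ) + c * u ^ h) / (1 + c * u ^ h) ^ 2 := by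
  have hpow : u * u ^ (h - 1) = u ^ h := mul_pow_sub_one hh u
  calc (Jpert β c u θ₀ h t).det
      = 1 - t * u ^ h * (1 - u) / (1 + c * u ^ h)
          - t * h * u ^ h * (1 - u) / (1 + c * u ^ h) ^ 2 := by
        rw [Jpert, Matrix.det_fin_two_of]
        linear_combination u * hns - ((1 - u) * h * t / (1 + c * u ^ h) ^ 2) * hpow
    _ = _ := by
        rw [show 1 + (h : ℝ) + c * u ^ h = h + (1 + c * u ^ h) by ring]
        generalize 1 + c * u ^ h = D at hD ⊢
        field_simp
        ring

end Jpert

theorem neimark_sacker_conditions_general (β c u θ₀ : ℝ) (h : ℕ) (hh : h = 1 ∨ h = 2)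
    (hc : 0 < c) (hu0 : 0 < u) (hu1 : u < 1)
    (hns : (1 - u) * (β - (h : ℝ) * θ₀ * u ^ (h - 1) / (1 + c * u ^ h) ^ 2) = 1) :
    (∀ t : ℝ, (Jpert β c u θ₀ h t).det
        = 1 - t * u ^ h * (1 - u) * (1 + (h : ℝ) + c * u ^ h) / (1 + c * u ^ h) ^ 2) ∧
    (∃ ε : ℝ, 0 < ε ∧ ∀ t : ℝ, |t| < ε →
      ∃ μ : ℂ, μ.im ≠ 0 ∧
        ‖μ‖ = Real.sqrt ((Jpert β c u θ₀ h t).det) ∧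
        ∀ l : ℂ, Polynomial.aeval l (Jpert β c u θ₀ h t).charpoly = 0 ↔
          (l = μ ∨ l = (starRingEnd ℂ) μ)) ∧
    (HasDerivAt (fun t : ℝ => Real.sqrt ((Jpert β c u θ₀ h t).det))
        (-(u ^ h * (1 - u) * (1 + (h : ℝ) + c * u ^ h) / (2 * (1 + c * u ^ h) ^ 2))) 0 ∧
      -(u ^ h * (1 - u) * (1 + (h : ℝ) + c * u ^ h) / (2 * (1 + c * u ^ h) ^ 2)) < 0) ∧
    (‖(2 - (u : ℂ) + Complex.I * (Real.sqrt (4 * u - u ^ 2) : ℝ)) / 2‖ = 1 ∧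
     (∀ l : ℂ, Polynomial.aeval l (Jpert β c u θ₀ h 0).charpoly = 0 ↔
        (l = (2 - (u : ℂ) + Complex.I * (Real.sqrt (4 * u - u ^ 2) : ℝ)) / 2 ∨
         l = (2 - (u : ℂ) - Complex.I * (Real.sqrt (4 * u - u ^ 2) : ℝ)) / 2)) ∧
     (∀ m : ℕ, 1 ≤ m → m ≤ 4 →
        ((2 - (u : ℂ) + Complex.I * (Real.sqrt (4 * u - u ^ 2) : ℝ)) / 2) ^ m ≠ 1 ∧
        ((2 - (u : ℂ) - Complex.I * (Real.sqrt (4 * u - u ^ 2) : ℝ)) / 2) ^ m ≠ 1)) := by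
  have hD : 0 < 1 + c * u ^ h := by positivity
  have hdet := det_Jpert (by omega) hD.ne' hns
  set K := u ^ h * (1 - u) * (1 + (h : ℝ) + c * u ^ h) / (1 + c * u ^ h) ^ 2 with hK
  have hdetK : ∀ t, (Jpert β c u θ₀ h t).det = 1 - t * K := fun t => by rw [hdet]; ring
  have htr₀ : (Jpert β c u θ₀ h 0).trace = 2 - u := by rw [trace_Jpert]; ring
  have hdet₀ : (Jpert β c u θ₀ h 0).det = 1 := by rw [hdetK]; ring
  refine ⟨hdet, ?_, ⟨?_, ?_⟩, Matrix.unit_circle_roots_charpoly_of_det_eq_one hdet₀ htr₀ hu0 hu1⟩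
  · simpa using exists_conj_pair_roots_charpoly_near continuous_Jpert.continuousAt
      (t₀ := 0) (by rw [htr₀, hdet₀]; nlinarith)
  · have hsqrt : HasDerivAt (fun t => √(1 - t * K)) (-K / 2) 0 := by
      simpa using (((hasDerivAt_id (0 : ℝ)).mul_const K).const_sub 1).sqrt (by simp)
    convert hsqrt using 1
    · exact funext fun t => by rw [hdetK]
    · rw [hK, neg_div, div_div, mul_comm 2]
  · have h1u : 0 < 1 - u := by linarith
    exact neg_neg_of_pos (div_pos (mul_pos (mul_pos (pow_pos hu0 h) h1u) (by positivity))
      (by positivity))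

/-- At a Neimark–Sacker point (`(1-ũ)(β - hθ₀ũ^{h-1}/(1+cũ^h)²) = 1`, `0 < ũ < 1`):
(1) `det J(θ*) = 1 - θ* ũ^h(1-ũ)(1+h+cũ^h)/(1+cũ^h)²`;
(2) near `θ* = 0` the eigenvalues of `J(θ*)` are a nonreal complex-conjugate pair
of modulus `√(det J(θ*))`;
(3) `d/dθ* √(det J(θ*))` at `0` equals `-ũ^h(1-ũ)(1+h+cũ^h)/(2(1+cũ^h)²) < 0`;
(4) at `θ* = 0` the eigenvalues `((2-ũ) ± i√(4ũ-ũ²))/2` have modulus `1` and their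
`m`-th powers differ from `1` for `m = 1,2,3,4`. -/
theorem neimark_sacker_conditions (β c u θ₀ : ℝ) (h : ℕ) (hh : h = 1 ∨ h = 2)
    (hβ : 0 < β) (hc : 0 < c) (hu0 : 0 < u) (hu1 : u < 1)
    (hns : (1 - u) * (β - (h : ℝ) * θ₀ * u ^ (h - 1) / (1 + c * u ^ h) ^ 2) = 1) :
    (∀ t : ℝ, (Jpert β c u θ₀ h t).det
        = 1 - t * u ^ h * (1 - u) * (1 + (h : ℝ) + c * u ^ h) / (1 + c * u ^ h) ^ 2) ∧
    (∃ ε : ℝ, 0 < ε ∧ ∀ t : ℝ, |t| < ε →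
      ∃ μ : ℂ, μ.im ≠ 0 ∧
        ‖μ‖ = Real.sqrt ((Jpert β c u θ₀ h t).det) ∧
        ∀ l : ℂ, Polynomial.aeval l (Jpert β c u θ₀ h t).charpoly = 0 ↔
          (l = μ ∨ l = (starRingEnd ℂ) μ)) ∧
    (HasDerivAt (fun t : ℝ => Real.sqrt ((Jpert β c u θ₀ h t).det))
        (-(u ^ h * (1 - u) * (1 + (h : ℝ) + c * u ^ h) / (2 * (1 + c * u ^ h) ^ 2))) 0 ∧
      -(u ^ h * (1 - u) * (1 + (h : ℝ) + c * u ^ h) / (2 * (1 + c * u ^ h) ^ 2)) < 0) ∧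
    (‖(2 - (u : ℂ) + Complex.I * (Real.sqrt (4 * u - u ^ 2) : ℝ)) / 2‖ = 1 ∧
     (∀ l : ℂ, Polynomial.aeval l (Jpert β c u θ₀ h 0).charpoly = 0 ↔
        (l = (2 - (u : ℂ) + Complex.I * (Real.sqrt (4 * u - u ^ 2) : ℝ)) / 2 ∨
         l = (2 - (u : ℂ) - Complex.I * (Real.sqrt (4 * u - u ^ 2) : ℝ)) / 2)) ∧
     (∀ m : ℕ, 1 ≤ m → m ≤ 4 →
        ((2 - (u : ℂ) + Complex.I * (Real.sqrt (4 * u - u ^ 2) : ℝ)) / 2) ^ m ≠ 1 ∧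
        ((2 - (u : ℂ) - Complex.I * (Real.sqrt (4 * u - u ^ 2) : ℝ)) / 2) ^ m ≠ 1)) :=
  neimark_sacker_conditions_general β c u θ₀ h hh hc hu0 hu1 hns
end
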